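/- arXiv:1111.5171 — 4 statements merged into one kernel-verified Lean document; each statement's English description precedes it below -/
import Mathlib

section
/- Every polynomial function on ℂ⁴ restricted to X = {x₁x₄ + x₂x₃ = 0} that is invariant under the action a ∘ x = (x₁ + a x₂, x₂, x₃ − a x₄, x₄) agrees on X with a polynomial in x₂ and x₄ alone. Equivalently, the algebra of F-invariant regular functions on X is generated by x₂ and x₄. -/
/-!
On the cone `X`, the orbit of a point with `(x₂, x₄) ≠ (0, 0)` meets the plane `x₁ = x₃ = 0`, so an
invariant `f` agrees there with its restriction `(x₂, x₄) ↦ f(0, x₂, 0, x₄)` to that plane. Such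
points are dense in `X`, and both sides are continuous, so they agree on all of `X`.
-/

def actF (a : ℂ) (x : Fin 4 → ℂ) : Fin 4 → ℂ :=
  ![x 0 + a * x 1, x 1, x 2 - a * x 3, x 3]

open MvPolynomial Set

def quadricCone : Set (Fin 4 → ℂ) := {x | x 0 * x 3 + x 1 * x 2 = 0}

lemma exists_actF_eq_of_mem_quadricCone {x : Fin 4 → ℂ} (hx : x ∈ quadricCone)
    (h : x 1 ≠ 0 ∨ x 3 ≠ 0) : ∃ a, actF a x = ![0, x 1, 0, x 3] := by
  have hx : x 0 * x 3 + x 1 * x 2 = 0 := hx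
  rcases h with h1 | h3
  · refine ⟨-x 0 / x 1, funext fun i => ?_⟩
    fin_cases i <;> simp [actF] <;> field_simp
    · ring
    · linear_combination hx
  · refine ⟨x 2 / x 3, funext fun i => ?_⟩
    fin_cases i <;> simp [actF] <;> field_simp
    · linear_combination hx
    · ring

lemma quadricCone_subset_closure :
    quadricCone ⊆ closure {x ∈ quadricCone | x 1 ≠ 0 ∨ x 3 ≠ 0} := by
  intro x hx
  by_cases hgen : x 1 ≠ 0 ∨ x 3 ≠ 0
  · exact subset_closure ⟨hx, hgen⟩
  obtain ⟨h1, h3⟩ : x 1 = 0 ∧ x 3 = 0 := by simpa only [not_or, not_not] using hgen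
  -- The factor `x 0 + t` keeps the curve generic for small `t ≠ 0` even when `x = 0`.
  let c : ℂ → Fin 4 → ℂ := fun t => ![x 0 + t, t * (x 0 + t), x 2, -(t * x 2)]
  have hc : Continuous c := by fun_prop
  have hc0 : c 0 = x := by
    funext i; fin_cases i <;> simp [c, h1, h3]
  have hD : Dense ({0}ᶜ \ {-x 0} : Set ℂ) := (dense_compl_singleton 0).sdiff_singleton _
  have hcD : c '' ({0}ᶜ \ {-x 0}) ⊆ {x ∈ quadricCone | x 1 ≠ 0 ∨ x 3 ≠ 0} := by
    rintro _ ⟨t, ⟨ht, ht'⟩, rfl⟩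
    have hsum : x 0 + t ≠ 0 := fun h => ht' (by rw [mem_singleton_iff]; linear_combination h)
    refine ⟨?_, Or.inl (mul_ne_zero ht hsum)⟩
    show (x 0 + t) * -(t * x 2) + t * (x 0 + t) * x 2 = 0
    ring
  have hx0 : x ∈ c '' closure ({0}ᶜ \ {-x 0}) := ⟨0, by simp [hD.closure_eq], hc0⟩
  exact closure_mono hcD (image_closure_subset_closure_image hc hx0)

lemma eval_bind₁_zero_X_zero_X (f : MvPolynomial (Fin 4) ℂ) (y : Fin 2 → ℂ) :
    eval y (bind₁ ![0, X 0, 0, X 1] f) = eval ![0, y 0, 0, y 1] f := by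
  rw [eval, eval₂Hom_bind₁]
  congr 2
  ext i; fin_cases i <;> simp

theorem stmt11 (f : MvPolynomial (Fin 4) ℂ)
    (hinv : ∀ (a : ℂ) (x : Fin 4 → ℂ), x 0 * x 3 + x 1 * x 2 = 0 →
      MvPolynomial.eval (actF a x) f = MvPolynomial.eval x f) :
    ∃ g : MvPolynomial (Fin 2) ℂ, ∀ x : Fin 4 → ℂ, x 0 * x 3 + x 1 * x 2 = 0 →
      MvPolynomial.eval x f = MvPolynomial.eval ![x 1, x 3] g := by
  have hgen : EqOn (fun x => eval x f) (fun x => eval ![0, x 1, 0, x 3] f)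
      {x ∈ quadricCone | x 1 ≠ 0 ∨ x 3 ≠ 0} := by
    rintro x ⟨hx, h⟩
    obtain ⟨a, ha⟩ := exists_actF_eq_of_mem_quadricCone hx h
    simpa [ha] using (hinv a x hx).symm
  have hcont : Continuous fun x : Fin 4 → ℂ => eval ![0, x 1, 0, x 3] f :=
    (continuous_eval f).comp (by fun_prop)
  refine ⟨bind₁ ![0, X 0, 0, X 1] f, fun x hx => ?_⟩
  rw [eval_bind₁_zero_X_zero_X]
  exact hgen.closure (continuous_eval f) hcont (quadricCone_subset_closure hx)
end

section
/- Let Z be a Hausdorff topological space and φ : X → Z a continuous map on X = {x ∈ ℂ⁴ : x₁x₄ + x₂x₃ = 0, x ≠ 0} (with the Euclidean topology) that is invariant under the F-action a ∘ x = (x₁ + a x₂, x₂, x₃ − a x₄, x₄). Then for every (x₁, x₃) ≠ (0,0) and every c ∈ ℂ \ {0}, φ(x₁, 0, x₃, 0) = φ(c x₁, 0, c x₃, 0). -/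
def X : Set (Fin 4 → ℂ) := {x | x 0 * x 3 + x 1 * x 2 = 0 ∧ x ≠ 0}

open Filter Topology

theorem stmt13 {Z : Type*} [TopologicalSpace Z] [T2Space Z]
    (φ : (Fin 4 → ℂ) → Z) (hcont : ContinuousOn φ X)
    (hinv : ∀ (a : ℂ), ∀ x ∈ X, φ (actF a x) = φ x)
    (x₁ x₃ : ℂ) (h : (x₁, x₃) ≠ (0, 0)) (c : ℂ) (hc : c ≠ 0) :
    φ ![x₁, 0, x₃, 0] = φ ![c * x₁, 0, c * x₃, 0] := by
  have hne : x₁ ≠ 0 ∨ x₃ ≠ 0 := by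
    by_contra h'
    push_neg at h'
    exact h (by simp [h'.1, h'.2, Prod.ext_iff])
  set p : ℂ → (Fin 4 → ℂ) := fun t => ![x₁, t * x₁, x₃, -(t * x₃)] with hp
  set q : ℂ → (Fin 4 → ℂ) := fun t => ![c * x₁, t * x₁, c * x₃, -(t * x₃)] with hq
  have hpX : ∀ t, p t ∈ X := by
    intro t
    refine ⟨by simp [hp]; ring, fun h0 => ?_⟩
    have h1 := congrFun h0 0
    have h3 := congrFun h0 2
    simp [hp] at h1 h3
    rcases hne with h' | h'
    · exact h' h1
    · exact h' h3
  have hqX : ∀ t, q t ∈ X := by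
    intro t
    refine ⟨by simp [hq]; ring, fun h0 => ?_⟩
    have h1 := congrFun h0 0
    have h3 := congrFun h0 2
    simp [hq, hc] at h1 h3
    rcases hne with h' | h'
    · exact h' h1
    · exact h' h3
  have key : ∀ t : ℂ, t ≠ 0 → φ (p t) = φ (q t) := by
    intro t ht
    have heq : actF ((c - 1) / t) (p t) = q t := by
      funext i
      fin_cases i <;> simp [actF, hp, hq] <;> field_simp <;> ring
    have := hinv ((c - 1) / t) (p t) (hpX t)
    rw [heq] at this
    exact this.symm
  have hpcont : Continuous p := by
    apply continuous_pi
    intro i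
    fin_cases i <;> simp [hp] <;> fun_prop
  have hqcont : Continuous q := by
    apply continuous_pi
    intro i
    fin_cases i <;> simp [hq] <;> fun_prop
  have hlimp : Tendsto (fun t => φ (p t)) (𝓝[≠] (0 : ℂ)) (𝓝 (φ (p 0))) := by
    have : Tendsto p (𝓝[≠] (0 : ℂ)) (𝓝[X] (p 0)) := by
      rw [tendsto_nhdsWithin_iff]
      exact ⟨(hpcont.tendsto 0).mono_left nhdsWithin_le_nhds,
        Eventually.of_forall fun t => hpX t⟩
    exact (hcont (p 0) (hpX 0)).tendsto.comp this
  have hlimq : Tendsto (fun t => φ (q t)) (𝓝[≠] (0 : ℂ)) (𝓝 (φ (q 0))) := by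
    have : Tendsto q (𝓝[≠] (0 : ℂ)) (𝓝[X] (q 0)) := by
      rw [tendsto_nhdsWithin_iff]
      exact ⟨(hqcont.tendsto 0).mono_left nhdsWithin_le_nhds,
        Eventually.of_forall fun t => hqX t⟩
    exact (hcont (q 0) (hqX 0)).tendsto.comp this
  have hlimp' : Tendsto (fun t => φ (p t)) (𝓝[≠] (0 : ℂ)) (𝓝 (φ (q 0))) := by
    refine hlimq.congr' ?_
    filter_upwards [self_mem_nhdsWithin] with t ht
    exact (key t ht).symm
  have heq0 : φ (p 0) = φ (q 0) := tendsto_nhds_unique hlimp hlimp'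
  have hp0 : p 0 = ![x₁, 0, x₃, 0] := by
    funext i; fin_cases i <;> simp [hp]
  have hq0 : q 0 = ![c * x₁, 0, c * x₃, 0] := by
    funext i; fin_cases i <;> simp [hq]
  rw [hp0, hq0] at heq0
  exact heq0
end

section
/- The map ρ : X → Â² defined by ρ(x) = ((x₂,x₄),(x₁:−x₃)) is constant on F-orbits, where F = ℂ acts by a ∘ x = (x₁ + a x₂, x₂, x₃ − a x₄, x₄), and ρ separates the F-orbits of points with (x₂,x₄) ≠ (0,0): two such points have the same image under ρ if and only if they lie in the same F-orbit. -/
def inX (x : Fin 4 → ℂ) : Prop := x 0 * x 3 + x 1 * x 2 = 0 ∧ x ≠ 0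

abbrev P1 := Projectivization ℂ (Fin 2 → ℂ)

/-! Both parts come down to the vanishing of a `2 × 2` determinant. Acting by `a` adds
`a (x₂, x₄)` to `(x₁, -x₃)`, and `det ((x₁, -x₃), (x₂, x₄))` is, up to sign, the equation of `X`, so the
class `(x₁ : -x₃)` does not move. Conversely, if `x, y ∈ X` share `(x₂, x₄) ≠ 0`, subtracting their
equations shows that `(y₁ - x₁, x₃ - y₃)` is a multiple `a (x₂, x₄)`, and then `a ∘ x = y`. -/

lemma exists_smul_eq_of_mul_eq_mul {K : Type*} [Field K] {v w : Fin 2 → K} (hw : w ≠ 0)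
    (h : v 0 * w 1 = v 1 * w 0) : ∃ a : K, a • w = v := by
  by_cases hw0 : w 0 = 0
  · have hw1 : w 1 ≠ 0 := fun hw1 => hw (by ext i; fin_cases i <;> simp [hw0, hw1])
    have hv0 : v 0 = 0 := by simpa [hw0, hw1] using h
    refine ⟨v 1 / w 1, ?_⟩
    ext i; fin_cases i <;> simp [hw0, hv0, hw1]
  · refine ⟨v 0 / w 0, ?_⟩
    ext i; fin_cases i
    · simp [hw0]
    · change v 0 / w 0 * w 1 = v 1
      field_simp
      linear_combination h

lemma Projectivization.mk_eq_mk_of_mul_eq_mul {K : Type*} [Field K] {v w : Fin 2 → K}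
    (hv : v ≠ 0) (hw : w ≠ 0) (h : v 0 * w 1 = v 1 * w 0) :
    Projectivization.mk K v hv = Projectivization.mk K w hw :=
  (Projectivization.mk_eq_mk_iff' K v w hv hw).mpr (exists_smul_eq_of_mul_eq_mul hw h)

lemma mk_actF_eq_mk (a : ℂ) {x : Fin 4 → ℂ} (hx : x 0 * x 3 + x 1 * x 2 = 0)
    (h' : ![actF a x 0, -(actF a x 2)] ≠ 0) (h : ![x 0, -(x 2)] ≠ 0) :
    Projectivization.mk ℂ ![actF a x 0, -(actF a x 2)] h' =
      Projectivization.mk ℂ ![x 0, -(x 2)] h := by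
  apply Projectivization.mk_eq_mk_of_mul_eq_mul
  simp only [actF, Matrix.cons_val]
  linear_combination (-a) * hx

lemma exists_actF_eq {x y : Fin 4 → ℂ} (hx : x 0 * x 3 + x 1 * x 2 = 0)
    (hy : y 0 * y 3 + y 1 * y 2 = 0) (h1 : x 1 = y 1) (h3 : x 3 = y 3) (hne : ![x 1, x 3] ≠ 0) :
    ∃ a : ℂ, actF a x = y := by
  obtain ⟨a, ha⟩ := exists_smul_eq_of_mul_eq_mul (v := ![y 0 - x 0, x 2 - y 2]) hne (by
    simp only [Matrix.cons_val]
    linear_combination hy - hx + y 2 * h1 + y 0 * h3)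
  have ha0 : a * x 1 = y 0 - x 0 := by simpa using congrFun ha 0
  have ha2 : a * x 3 = x 2 - y 2 := by simpa using congrFun ha 1
  refine ⟨a, ?_⟩
  ext i; fin_cases i
  · change x 0 + a * x 1 = y 0
    linear_combination ha0
  · exact h1
  · change x 2 - a * x 3 = y 2
    linear_combination -ha2
  · exact h3

theorem stmt15 :
    (∀ (a : ℂ) (x : Fin 4 → ℂ), inX x →
      (actF a x 1 = x 1 ∧ actF a x 3 = x 3) ∧
      ∀ (h' : ![actF a x 0, -(actF a x 2)] ≠ 0) (h : ![x 0, -(x 2)] ≠ 0),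
        Projectivization.mk ℂ ![actF a x 0, -(actF a x 2)] h' =
          Projectivization.mk ℂ ![x 0, -(x 2)] h) ∧
    (∀ x y : Fin 4 → ℂ, inX x → inX y →
      ∀ (hx : ![x 1, x 3] ≠ 0) (hy : ![y 1, y 3] ≠ 0),
      ((((x 1, x 3) : ℂ × ℂ), Projectivization.mk ℂ ![x 1, x 3] hx) =
        (((y 1, y 3) : ℂ × ℂ), Projectivization.mk ℂ ![y 1, y 3] hy) ↔
          ∃ a : ℂ, actF a x = y)) := by
  refine ⟨fun a x hx => ⟨⟨rfl, rfl⟩, mk_actF_eq_mk a hx.1⟩, fun x y hx hy hne _ => ?_⟩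
  constructor
  · intro heq
    obtain ⟨h1, h3⟩ := Prod.ext_iff.mp (congrArg Prod.fst heq)
    exact exists_actF_eq hx.1 hy.1 h1 h3 hne
  · rintro ⟨a, rfl⟩
    rfl
end

section
/- The quotient map ρ : X → Â² does not separate all closed F-orbits: the points z = (x₁, 0, x₃, 0) and z' = (c x₁, 0, c x₃, 0) for c ≠ 0, 1 and (x₁,x₃) ≠ (0,0) are distinct fixed points of the F-action (hence distinct closed orbits) but ρ(z) = ρ(z'). -/
lemma inX_smul {x : Fin 4 → ℂ} (hx : inX x) {c : ℂ} (hc : c ≠ 0) : inX (c • x) := by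
  refine ⟨?_, smul_ne_zero hc hx.2⟩
  simp only [Pi.smul_apply, smul_eq_mul]
  linear_combination c ^ 2 * hx.1

lemma inX_of_ne_zero {p q : ℂ} (h : (p, q) ≠ (0, 0)) : inX ![p, 0, q, 0] := by
  refine ⟨by simp, fun h0 => h ?_⟩
  simpa using And.intro (congrFun h0 0) (congrFun h0 2)

lemma actF_eq_self {x : Fin 4 → ℂ} (h1 : x 1 = 0) (h3 : x 3 = 0) (a : ℂ) : actF a x = x := by
  ext i
  fin_cases i <;> simp [actF, h1, h3]

theorem stmt16 (x₁ x₃ c : ℂ) (h : (x₁, x₃) ≠ (0, 0)) (hc0 : c ≠ 0) (hc1 : c ≠ 1)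
    (h1 : ![x₁, -x₃] ≠ 0) (h2 : ![c * x₁, -(c * x₃)] ≠ 0) :
    inX ![x₁, 0, x₃, 0] ∧ inX ![c * x₁, 0, c * x₃, 0] ∧
    (![x₁, 0, x₃, 0] : Fin 4 → ℂ) ≠ ![c * x₁, 0, c * x₃, 0] ∧
    (∀ a : ℂ, actF a ![x₁, 0, x₃, 0] = ![x₁, 0, x₃, 0]) ∧
    (∀ a : ℂ, actF a ![c * x₁, 0, c * x₃, 0] = ![c * x₁, 0, c * x₃, 0]) ∧
    ((((0 : ℂ), (0 : ℂ)), Projectivization.mk ℂ ![x₁, -x₃] h1) =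
      (((0 : ℂ), (0 : ℂ)), Projectivization.mk ℂ ![c * x₁, -(c * x₃)] h2)) := by
  have hz : inX ![x₁, 0, x₃, 0] := inX_of_ne_zero h
  have hcz : (![c * x₁, 0, c * x₃, 0] : Fin 4 → ℂ) = c • ![x₁, 0, x₃, 0] := by
    ext i
    fin_cases i <;> simp
  have hline : ![c * x₁, -(c * x₃)] = c • ![x₁, -x₃] := by
    ext i
    fin_cases i <;> simp
  rw [hcz]
  refine ⟨hz, inX_smul hz hc0, fun he => ?_, actF_eq_self rfl rfl, actF_eq_self (by simp) (by simp),
    Prod.ext rfl ((Projectivization.mk_eq_mk_iff' ℂ _ _ h2 h1).2 ⟨c, hline.symm⟩).symm⟩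
  exact hc1 (smul_left_injective ℂ hz.2 ((one_smul ℂ _).trans he)).symm
end
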